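/- arXiv:2204.06757 — 3 statements merged into one kernel-verified Lean document; each statement's English description precedes it below -/
import Mathlib

section
/- Let g ≥ 1 and let π : ℂ^{2g} → ℂ^g be a surjective ℂ-linear map whose kernel contains no nonzero real vector, i.e. if z ∈ ker π and every coordinate of z is real, then z = 0. Let R ⊆ ℂ^g be a bounded subset. Then the set F ∩ π^{-1}(R) is a bounded subset of ℂ^{2g}, where F := {z = (z_1,…,z_{2g}) ∈ ℂ^{2g} : Re(z_j) ∈ [0,1) for all j}. -/
open Complex

/-- If `π : ℂ^{2g} → ℂ^g` is a surjective `ℂ`-linear map whose kernel contains no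
nonzero real vector, and `R ⊆ ℂ^g` is bounded, then the intersection of the strip
`F = {z : Re(z_j) ∈ [0,1) for all j}` with `π⁻¹(R)` is bounded. -/
theorem bounded_strip_inter_preimage
    (g : ℕ) (hg : 1 ≤ g)
    (π : (Fin (2 * g) → ℂ) →ₗ[ℂ] (Fin g → ℂ))
    (hsurj : Function.Surjective π)
    (hker : ∀ z : Fin (2 * g) → ℂ, π z = 0 → (∀ j, (z j).im = 0) → z = 0)
    (R : Set (Fin g → ℂ)) (hR : Bornology.IsBounded R) :
    Bornology.IsBounded
      {z : Fin (2 * g) → ℂ | (∀ j, (z j).re ∈ Set.Ico (0 : ℝ) 1) ∧ π z ∈ R} := by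
  -- real-linear map recording real parts and π
  set T : (Fin (2 * g) → ℂ) →ₗ[ℝ] (Fin (2 * g) → ℝ) × (Fin g → ℂ) :=
    (LinearMap.pi fun j => Complex.reLm.comp (LinearMap.proj j)).prod (π.restrictScalars ℝ)
  have hinj : Function.Injective T := by
    rw [← LinearMap.ker_eq_bot, LinearMap.ker_eq_bot']
    intro z hz
    have hre : ∀ j, (z j).re = 0 := fun j => congrFun (congrArg Prod.fst hz) j
    have hπz : π z = 0 := congrArg Prod.snd hz
    -- z = I • w with w real
    set w : Fin (2 * g) → ℂ := fun j => ((z j).im : ℂ) with hw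
    have hzw : z = Complex.I • w := by
      funext j
      simp only [hw, Pi.smul_apply, smul_eq_mul]
      rw [← Complex.re_add_im (z j), hre j]
      simp [mul_comm]
    have hπw : π w = 0 := by
      have : Complex.I • π w = 0 := by
        rw [← map_smul, ← hzw, hπz]
      have h2 : Complex.I • π w = (0 : Fin g → ℂ) → π w = 0 := fun h => by
        have := congrArg (fun v => Complex.I⁻¹ • v) h
        simpa [smul_smul, Complex.I_ne_zero] using this
      exact h2 this
    have : w = 0 := hker w hπw (fun j => by simp [hw])
    rw [hzw, this, smul_zero]
  obtain ⟨K, hK0, hK⟩ := T.injective_iff_antilipschitz.mp hinj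
  obtain ⟨C, hC⟩ := hR.exists_norm_le
  rw [isBounded_iff_forall_norm_le]
  refine ⟨K * max 1 C, fun z hz => ?_⟩
  obtain ⟨hre, hπ⟩ := hz
  have h1 : ‖z‖ ≤ K * ‖T z‖ := by
    have := hK.le_mul_dist z 0
    simpa [dist_eq_norm, map_zero] using this
  have h2 : ‖T z‖ ≤ max 1 C := by
    rw [Prod.norm_def]
    apply max_le
    · refine le_trans ((pi_norm_le_iff_of_nonneg (zero_le_one)).mpr fun j => ?_)
        (le_max_left 1 C)
      have h := hre j
      have hT1 : (T z).1 j = (z j).re := rfl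
      rw [Real.norm_eq_abs, abs_le, hT1]
      constructor <;> [linarith [h.1]; linarith [h.2]]
    · exact le_trans (hC _ hπ) (le_max_right 1 C)
  calc ‖z‖ ≤ K * ‖T z‖ := h1
    _ ≤ K * max 1 C := by
        exact mul_le_mul_of_nonneg_left h2 (by positivity)
end

section
/- Let g ≥ 1 and let τ be a g × g complex matrix which is symmetric and whose imaginary part Im τ — the real g × g matrix with entries Im(τ_{ij}) — is positive definite. Consider the set H := {z ∈ ℂ^g : exp(z_j) is real and exp((τz)_j) is real for all j = 1,…,g} (equivalently, H = {z ∈ ℂ^g : Im(z_j) ∈ πℤ and Im((τz)_j) ∈ πℤ for all j}, an additive subgroup of ℂ^g). Then H is a discrete subset of ℂ^g: every point of H is isolated in H; equivalently, there exists ε > 0 such that the only z ∈ H with ‖z‖ < ε is z = 0. -/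
open Complex Matrix

/-!
`exp w` is real exactly when `Im w ∈ πℤ`, so near `0` a point `z` of the locus has `Im z = 0`;
then `Im (τ z) = (Im τ) (Re z)` is small and lies in `πℤ`, hence vanishes, and invertibility of
`Im τ` forces `z = 0`. The locus is an additive subgroup, so `0` being isolated makes every point
isolated.
-/

open Filter Topology

def Complex.expRealLocus : AddSubgroup ℂ where
  carrier := {w | (exp w).im = 0}
  add_mem' ha hb := by simp_all [exp_add, mul_im]
  zero_mem' := by simp
  neg_mem' ha := by simp_all [exp_neg, inv_im]

theorem Complex.im_eq_zero_of_mem_expRealLocus {w : ℂ} (hw : w ∈ expRealLocus)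
    (hπ : |w.im| < Real.pi) : w.im = 0 := by
  have hsin : Real.sin w.im = 0 := by
    simpa [expRealLocus, exp_im, (Real.exp_pos _).ne'] using hw
  exact (Real.sin_eq_zero_iff_of_lt_of_lt (abs_lt.1 hπ).1 (abs_lt.1 hπ).2).1 hsin

theorem Matrix.im_mulVec_ofReal {m n : Type*} [Fintype n] (τ : Matrix m n ℂ) (x : n → ℝ)
    (i : m) : ((τ *ᵥ fun j => (x j : ℂ)) i).im = (τ.map im *ᵥ x) i := by
  simp [mulVec, dotProduct, im_sum, mul_im]

section SiegelLocus

variable {ι : Type*} [Fintype ι]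

def siegelExpRealLocus (τ : Matrix ι ι ℂ) : AddSubgroup (ι → ℂ) :=
  AddSubgroup.pi Set.univ (fun _ => expRealLocus) ⊓
    (AddSubgroup.pi Set.univ fun _ => expRealLocus).comap τ.mulVecLin.toAddMonoidHom

theorem mem_siegelExpRealLocus {τ : Matrix ι ι ℂ} {z : ι → ℂ} :
    z ∈ siegelExpRealLocus τ ↔ ∀ j, (exp (z j)).im = 0 ∧ (exp ((τ *ᵥ z) j)).im = 0 := by
  simp [siegelExpRealLocus, AddSubgroup.mem_pi, expRealLocus, forall_and]

theorem eventually_eq_zero_of_mem_siegelExpRealLocus {τ : Matrix ι ι ℂ}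
    (hτ : Function.Injective (τ.map im).mulVec) :
    ∀ᶠ z in 𝓝 (0 : ι → ℂ), z ∈ siegelExpRealLocus τ → z = 0 := by
  have hball : Metric.ball (0 : ι → ℂ) Real.pi ∈ 𝓝 0 := Metric.ball_mem_nhds 0 Real.pi_pos
  have hτz : ∀ᶠ z in 𝓝 (0 : ι → ℂ), τ *ᵥ z ∈ Metric.ball 0 Real.pi :=
    (continuous_const.matrix_mulVec continuous_id).tendsto' 0 0 (mulVec_zero τ) hball
  filter_upwards [hball, hτz] with z hz hτz hmem
  have hpi : ∀ w : ι → ℂ, w ∈ Metric.ball 0 Real.pi → ∀ j, |(w j).im| < Real.pi :=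
    fun w hw j => (abs_im_le_norm _).trans_lt <|
      (norm_le_pi_norm w j).trans_lt (mem_ball_zero_iff.1 hw)
  have hmem' := mem_siegelExpRealLocus.1 hmem
  have him (j : ι) : (z j).im = 0 :=
    im_eq_zero_of_mem_expRealLocus (hmem' j).1 (hpi z hz j)
  have hreal : (fun j => ((z j).re : ℂ)) = z := funext fun j => ext rfl (him j).symm
  have hre : (τ.map im) *ᵥ (fun j => (z j).re) = 0 := funext fun j => by
    rw [← im_mulVec_ofReal, hreal]
    exact im_eq_zero_of_mem_expRealLocus (hmem' j).2 (hpi _ hτz j)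
  have hre0 : (fun j => (z j).re) = 0 := hτ (hre.trans (mulVec_zero _).symm)
  exact funext fun j => ext (congrFun hre0 j) (him j)

end SiegelLocus

theorem siegel_exp_real_locus_discrete_general
    (g : ℕ) (τ : Matrix (Fin g) (Fin g) ℂ)
    (hpos : (Matrix.of fun i j => (τ i j).im).PosDef) :
    (∀ z₀ : Fin g → ℂ,
        (∀ j, (Complex.exp (z₀ j)).im = 0 ∧ (Complex.exp (τ.mulVec z₀ j)).im = 0) →
        ∃ ε > (0 : ℝ), ∀ z : Fin g → ℂ,
          (∀ j, (Complex.exp (z j)).im = 0 ∧ (Complex.exp (τ.mulVec z j)).im = 0) →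
          ‖z - z₀‖ < ε → z = z₀) ∧
    (∃ ε > (0 : ℝ), ∀ z : Fin g → ℂ,
        (∀ j, (Complex.exp (z j)).im = 0 ∧ (Complex.exp (τ.mulVec z j)).im = 0) →
        ‖z‖ < ε → z = 0) := by
  have hτ : Function.Injective (τ.map im).mulVec :=
    mulVec_injective_iff_isUnit.2 hpos.isUnit
  obtain ⟨ε, hε, hsmall⟩ :=
    Metric.eventually_nhds_iff.1 (eventually_eq_zero_of_mem_siegelExpRealLocus hτ)
  have hzero : ∀ z ∈ siegelExpRealLocus τ, ‖z‖ < ε → z = 0 :=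
    fun z hz hlt => hsmall (by rwa [dist_zero_right]) hz
  refine ⟨fun z₀ hz₀ => ⟨ε, hε, fun z hz hlt => ?_⟩,
    ⟨ε, hε, fun z hz => hzero z (mem_siegelExpRealLocus.2 hz)⟩⟩
  have hsub := sub_mem (mem_siegelExpRealLocus.2 hz) (mem_siegelExpRealLocus.2 hz₀)
  exact sub_eq_zero.1 (hzero _ hsub hlt)

/-- For `τ` in the Siegel upper half space, the additive subgroup
`H = {z ∈ ℂ^g : exp(z_j) ∈ ℝ and exp((τz)_j) ∈ ℝ for all j}` is discrete:
every point of `H` is isolated in `H`; equivalently, there is `ε > 0` such that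
the only `z ∈ H` with `‖z‖ < ε` is `z = 0`. -/
theorem siegel_exp_real_locus_discrete
    (g : ℕ) (hg : 1 ≤ g) (τ : Matrix (Fin g) (Fin g) ℂ)
    (hsymm : τ.IsSymm)
    (hpos : (Matrix.of fun i j => (τ i j).im).PosDef) :
    (∀ z₀ : Fin g → ℂ,
        (∀ j, (Complex.exp (z₀ j)).im = 0 ∧ (Complex.exp (τ.mulVec z₀ j)).im = 0) →
        ∃ ε > (0 : ℝ), ∀ z : Fin g → ℂ,
          (∀ j, (Complex.exp (z j)).im = 0 ∧ (Complex.exp (τ.mulVec z j)).im = 0) →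
          ‖z - z₀‖ < ε → z = z₀) ∧
    (∃ ε > (0 : ℝ), ∀ z : Fin g → ℂ,
        (∀ j, (Complex.exp (z j)).im = 0 ∧ (Complex.exp (τ.mulVec z j)).im = 0) →
        ‖z‖ < ε → z = 0) :=
  siegel_exp_real_locus_discrete_general g τ hpos
end

section
/- Let n ≥ 1 and let V ⊆ ℂ^n be a Zariski-closed set whose vanishing ideal I(V) is a prime ideal of ℂ[x_1,…,x_n] (i.e. V is irreducible). If V is nonempty and compact in the Euclidean topology, then V consists of exactly one point. -/
/-- `V ⊆ K^n` is Zariski-closed if it is the common zero set of a set of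
polynomials in `K[x_1,…,x_n]`. -/
def IsZariskiClosed (K : Type*) [CommRing K] (n : ℕ) (V : Set (Fin n → K)) : Prop :=
  ∃ S : Set (MvPolynomial (Fin n) K),
    V = {x : Fin n → K | ∀ p ∈ S, MvPolynomial.eval x p = 0}

/-- The vanishing ideal `I(V)` of a subset `V ⊆ K^n`. -/
def vanishingIdealOf (K : Type*) [CommRing K] (n : ℕ) (V : Set (Fin n → K)) :
    Ideal (MvPolynomial (Fin n) K) where
  carrier := {p : MvPolynomial (Fin n) K | ∀ x ∈ V, MvPolynomial.eval x p = 0}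
  add_mem' := by
    intro a b ha hb x hx
    simp [map_add, ha x hx, hb x hx]
  zero_mem' := by
    intro x hx
    simp
  smul_mem' := by
    intro c p hp x hx
    simp [smul_eq_mul, map_mul, hp x hx]

/-!
Let `A = ℂ[x₁,…,xₙ]/I(V)` be the coordinate ring, a domain of countable dimension over `ℂ`.
By the Nullstellensatz, `xᵢ - c` is invertible in `A` whenever `c` is not the `i`-th coordinate
of a point of `V`; as `V` is compact, this happens for uncountably many `c`. The inverses
`(c - xᵢ)⁻¹` of a transcendental `xᵢ` would be linearly independent (partial fractions), so
`xᵢ` is algebraic over `ℂ`, and since `A` is a domain and `ℂ` is algebraically closed, `xᵢ` is a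
constant of `A`. Thus every coordinate is constant on `V`.
-/

open Polynomial in
theorem Transcendental.linearIndependent_resolvent {K A : Type*} [Field K] [CommRing A]
    [Algebra K A] {t : A} (ht : Transcendental K t) :
    LinearIndependent K fun r : ↥(spectrum K t)ᶜ => resolvent t (r : K) := by
  classical
  set u := fun r : ↥(spectrum K t)ᶜ => resolvent t (r : K)
  have hu (r : ↥(spectrum K t)ᶜ) : u r * (algebraMap K A r - t) = 1 :=
    Ring.inverse_mul_cancel _ (spectrum.notMem_iff.1 r.2)
  rw [linearIndependent_iff']
  intro s g hsum r₀ hr₀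
  -- `p` clears the denominators of `∑ g r / (r - t)`.
  set p : K[X] := ∑ r ∈ s, C (g r) * ∏ r' ∈ s.erase r, (C (r' : K) - X)
  have hp : p = 0 := by
    by_contra hp
    refine ht ⟨p, hp, ?_⟩
    calc Polynomial.aeval t p = (∑ r ∈ s, g r • u r) * ∏ r ∈ s, (algebraMap K A r - t) := by
          simp only [p, map_sum, map_mul, map_prod, map_sub, aeval_C, aeval_X, Finset.sum_mul]
          refine Finset.sum_congr rfl fun r hr => ?_
          rw [← Finset.mul_prod_erase s _ hr, smul_mul_assoc, ← mul_assoc, hu, one_mul,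
            Algebra.smul_def]
      _ = 0 := by rw [hsum, zero_mul]
  have hp₀ : p.eval (r₀ : K) = g r₀ * ∏ r ∈ s.erase r₀, ((r : K) - r₀) := by
    simp only [p, eval_finsetSum, eval_mul, eval_C, eval_prod, eval_sub, eval_X]
    refine Finset.sum_eq_single r₀ (fun r hr hne => ?_) (absurd hr₀)
    rw [Finset.prod_eq_zero (Finset.mem_erase.2 ⟨Ne.symm hne, hr₀⟩) (sub_self _), mul_zero]
  have hprod : ∏ r ∈ s.erase r₀, ((r : K) - r₀) ≠ 0 :=
    Finset.prod_ne_zero_iff.2 fun r hr =>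
      sub_ne_zero.2 fun h => (Finset.mem_erase.1 hr).1 (Subtype.ext h)
  rw [hp, eval_zero, eq_comm, mul_eq_zero] at hp₀
  exact hp₀.resolve_right hprod

theorem isAlgebraic_of_not_countable_compl_spectrum {K A : Type*} [Field K] [CommRing A]
    [Algebra K A] (hA : Module.rank K A ≤ Cardinal.aleph0) {t : A}
    (ht : ¬ (spectrum K t)ᶜ.Countable) : IsAlgebraic K t := by
  by_contra htr
  exact ht <| Cardinal.le_aleph0_iff_set_countable.1 <| Cardinal.lift_le_aleph0.1 <|
    (Transcendental.linearIndependent_resolvent htr).cardinal_lift_le_rank.trans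
      (Cardinal.lift_le_aleph0.2 hA)

theorem IsAlgebraic.mem_range_algebraMap {K A : Type*} [Field K] [IsAlgClosed K] [Ring A]
    [IsDomain A] [Algebra K A] {t : A} (ht : IsAlgebraic K t) : t ∈ (algebraMap K A).range :=
  minpoly.mem_range_of_degree_eq_one K t <|
    IsAlgClosed.degree_eq_one_of_irreducible K (minpoly.irreducible ht.isIntegral)

theorem IsCompact.not_countable_compl {E : Type*} (𝕜 : Type*) [NontriviallyNormedField 𝕜]
    [CompleteSpace 𝕜] [AddCommGroup E] [Module 𝕜 E] [Nontrivial E] [TopologicalSpace E]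
    [ContinuousAdd E] [ContinuousSMul 𝕜 E] [T2Space E] [NoncompactSpace E] {s : Set E} (hs : IsCompact s) :
    ¬ sᶜ.Countable := fun h =>
  hs.ne_univ <| by simpa [hs.isClosed.closure_eq] using (h.dense_compl 𝕜).closure_eq

namespace MvPolynomial

theorem rank_quotient_le_aleph0 {K σ : Type*} [Field K] [Countable σ]
    (I : Ideal (MvPolynomial σ K)) : Module.rank K (MvPolynomial σ K ⧸ I) ≤ Cardinal.aleph0 :=
  calc Module.rank K (MvPolynomial σ K ⧸ I) ≤ Module.rank K (MvPolynomial σ K) :=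
        (Ideal.Quotient.mkₐ K I).toLinearMap.rank_le_of_surjective
          (Ideal.Quotient.mkₐ_surjective K I)
    _ ≤ Cardinal.aleph0 := by
        rw [rank_eq_lift]
        exact Cardinal.lift_le_aleph0.2 Cardinal.mk_le_aleph0

theorem spectrum_mk_X_subset {k σ : Type*} [Field k] [IsAlgClosed k] [Finite σ]
    (I : Ideal (MvPolynomial σ k)) (i : σ) :
    spectrum k (Ideal.Quotient.mk I (X i)) ⊆ (fun x => x i) '' zeroLocus k I := by
  intro c hc
  by_contra hcV
  have hempty : zeroLocus k (I ⊔ Ideal.span {C c - X i}) = ∅ := by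
    refine Set.eq_empty_of_forall_notMem fun x hx => hcV ⟨x, ?_, ?_⟩
    · exact zeroLocus_anti_mono le_sup_left hx
    · simpa [sub_eq_zero, eq_comm] using
        hx _ (Ideal.mem_sup_right (Ideal.mem_span_singleton_self _))
  have htop : I ⊔ Ideal.span {C c - X i} = ⊤ := by
    rw [← Ideal.radical_eq_top, ← vanishingIdeal_zeroLocus_eq_radical (K := k), hempty,
      vanishingIdeal_empty]
  refine spectrum.mem_iff.1 hc ?_
  rw [← Ideal.span_singleton_eq_top]
  have := congrArg (Ideal.map (Ideal.Quotient.mk I)) htop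
  rwa [Ideal.map_sup, Ideal.map_quotient_self, bot_sup_eq, Ideal.map_span, Set.image_singleton,
    Ideal.map_top, map_sub, ← algebraMap_eq, Ideal.Quotient.mk_algebraMap] at this

variable {𝕜 σ : Type*} [NontriviallyNormedField 𝕜] [CompleteSpace 𝕜] [IsAlgClosed 𝕜] [Finite σ]

theorem exists_forall_apply_eq_of_isCompact (I : Ideal (MvPolynomial σ 𝕜)) [I.IsPrime]
    (hI : IsCompact (zeroLocus 𝕜 I)) (i : σ) : ∃ r : 𝕜, ∀ x ∈ zeroLocus 𝕜 I, x i = r := by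
  have hspec : ¬ (spectrum 𝕜 (Ideal.Quotient.mk I (X i)))ᶜ.Countable := fun h =>
    (hI.image (continuous_apply i)).not_countable_compl 𝕜
      (h.mono (Set.compl_subset_compl.2 (spectrum_mk_X_subset I i)))
  obtain ⟨r, hr⟩ := (isAlgebraic_of_not_countable_compl_spectrum
    (rank_quotient_le_aleph0 I) hspec).mem_range_algebraMap
  have hrI : X i - C r ∈ I := by
    rw [← Ideal.Quotient.eq_zero_iff_mem, map_sub, ← hr]
    exact sub_self _
  exact ⟨r, fun x hx => by simpa [sub_eq_zero] using hx _ hrI⟩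

theorem subsingleton_zeroLocus_of_isCompact (I : Ideal (MvPolynomial σ 𝕜)) [I.IsPrime]
    (hI : IsCompact (zeroLocus 𝕜 I)) : (zeroLocus 𝕜 I).Subsingleton := by
  choose r hr using exists_forall_apply_eq_of_isCompact I hI
  exact fun x hx y hy => _root_.funext fun i => (hr i x hx).trans (hr i y hy).symm

end MvPolynomial

theorem vanishingIdealOf_eq_vanishingIdeal (K : Type*) [Field K] (n : ℕ) (V : Set (Fin n → K)) :
    vanishingIdealOf K n V = MvPolynomial.vanishingIdeal K V :=
  Ideal.ext fun _ => Iff.rfl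

theorem IsZariskiClosed.zeroLocus_vanishingIdeal {K : Type*} [Field K] {n : ℕ}
    {V : Set (Fin n → K)} (hV : IsZariskiClosed K n V) :
    MvPolynomial.zeroLocus K (MvPolynomial.vanishingIdeal K V) = V := by
  obtain ⟨S, rfl⟩ := hV
  refine subset_antisymm (fun x hx p hp => hx p fun y hy => hy p hp) ?_
  exact MvPolynomial.zeroLocus_vanishingIdeal_le _

theorem irreducible_compact_affine_variety_is_point_general
    (n : ℕ) (V : Set (Fin n → ℂ))
    (hV : IsZariskiClosed ℂ n V)
    (hprime : (vanishingIdealOf ℂ n V).IsPrime)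
    (hne : V.Nonempty) (hcpt : IsCompact V) :
    ∃ x : Fin n → ℂ, V = {x} := by
  rw [vanishingIdealOf_eq_vanishingIdeal] at hprime
  rw [← hV.zeroLocus_vanishingIdeal] at hcpt hne ⊢
  obtain ⟨x, hx⟩ := hne
  exact ⟨x, (MvPolynomial.subsingleton_zeroLocus_of_isCompact _ hcpt).eq_singleton_of_mem hx⟩

/-- An irreducible Zariski-closed subset of `ℂ^n` that is nonempty and compact
in the Euclidean topology is a single point. -/
theorem irreducible_compact_affine_variety_is_point
    (n : ℕ) (hn : 1 ≤ n) (V : Set (Fin n → ℂ))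
    (hV : IsZariskiClosed ℂ n V)
    (hprime : (vanishingIdealOf ℂ n V).IsPrime)
    (hne : V.Nonempty) (hcpt : IsCompact V) :
    ∃ x : Fin n → ℂ, V = {x} :=
  irreducible_compact_affine_variety_is_point_general n V hV hprime hne hcpt
end
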